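/- Consistence for obligations: Let D = (F, R, >) be a defeasible deontic theory whose superiority relation > is acyclic. Then for every plain literal l it is impossible that both D ⊢_L +∂_O l and D ⊢_L +∂_O ¬l hold, for each variant L ∈ {S, C}. -/

import Mathlib

namespace DDL

/-!
Defeasible Deontic Logic with Meta-Rules (Olivieri, Governatori, Cristani, Rotolo, Sattar).
Syntax: plain literals, modalities, standard rules, rule expressions, (meta-)rules, theories.
-/


/-- Propositional atoms. -/
abbrev Atom := ℕ

/-- Rule labels (names). -/
abbrev Label := ℕ

/-- Plain literals: atoms and negated atoms. -/
inductive PLit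
  | pos : Atom → PLit
  | neg : Atom → PLit
deriving DecidableEq

/-- The complement `~l` of a plain literal. -/
def PLit.compl : PLit → PLit
  | .pos a => .neg a
  | .neg a => .pos a

/-- Modalities: constitutive (C), obligation (O), permission (P). -/
inductive Modality
  | C | O | P
deriving DecidableEq

/-- The two variants of the logic: Simple Conflict (S) and Cautious Conflict (Cau). -/
inductive Variant
  | S | Cau
deriving DecidableEq

/-- Rules are defeasible rules (⇒) or defeaters (⇝). -/
inductive ArrowType
  | defeasible | defeater
deriving DecidableEq

/-- Antecedent elements of standard rules: plain literals `l`,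
deontic literals `□l` and negated deontic literals `¬□l`. -/
inductive LitElem
  | plain : PLit → LitElem
  | mod : Modality → PLit → LitElem
  | negMod : Modality → PLit → LitElem
deriving DecidableEq

/-- A standard rule `α : A(α) ↪_□ C(α)` where the consequent is an ⊗-chain
of plain literals (a singleton unless the mode is O). -/
structure StdRule where
  label : Label
  ants : Finset LitElem
  arrow : ArrowType
  mode : Modality
  head : List PLit
deriving DecidableEq

/-- A rule expression: a standard rule `α` (pos = true) or its negation `¬α` (pos = false). -/
structure RuleExpr where
  rule : StdRule
  pos : Bool
deriving DecidableEq

/-- The complement of a rule expression (α ↦ ¬α, ¬α ↦ α). -/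
def RuleExpr.compl (e : RuleExpr) : RuleExpr := ⟨e.rule, !e.pos⟩

/-- Antecedent elements of (meta-)rules: literal elements, rule expressions `β`,
deontic rule expressions `□β` and negated deontic rule expressions `¬□β`. -/
inductive AntElem
  | lit : LitElem → AntElem
  | rex : RuleExpr → AntElem
  | modRex : Modality → RuleExpr → AntElem
  | negModRex : Modality → RuleExpr → AntElem
deriving DecidableEq

/-- Consequent (⊗-chain) elements: plain literals or rule expressions. -/
inductive ConElem
  | lit : PLit → ConElem
  | rex : RuleExpr → ConElem
deriving DecidableEq

/-- Complement of a consequent element. -/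
def ConElem.compl : ConElem → ConElem
  | .lit l => .lit l.compl
  | .rex e => .rex e.compl

/-- A (possibly meta-) rule: at most one level of nesting, since nested rules
in antecedents and consequents are standard rules. -/
structure Rule where
  label : Label
  ants : Finset AntElem
  arrow : ArrowType
  mode : Modality
  head : List ConElem
deriving DecidableEq

/-- A standard rule viewed as a rule. -/
def StdRule.toRule (r : StdRule) : Rule :=
  ⟨r.label, r.ants.image AntElem.lit, r.arrow, r.mode, r.head.map ConElem.lit⟩

/-- A signed (possibly meta-) rule: a rule or its negation. -/
abbrev SRule := Rule × Bool

def RuleExpr.toSRule (e : RuleExpr) : SRule := (e.rule.toRule, e.pos)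

/-- A defeasible deontic theory `D = (F, R, >)`: a finite set of facts
(plain literals), a finite set of rules, and a superiority relation over rules. -/
structure Theory where
  F : Finset PLit
  R : Finset Rule
  sup : Finset (Rule × Rule)

/-- The standard rule (if any) nested in an antecedent element. -/
def AntElem.nested : AntElem → Option RuleExpr
  | .lit _ => none
  | .rex e => some e
  | .modRex _ e => some e
  | .negModRex _ e => some e

/-- The rules appearing (nested) in a rule. -/
def Rule.nestedRules (r : Rule) : Set Rule :=
  {s | (∃ a ∈ r.ants, ∃ e, a.nested = some e ∧ s = e.rule.toRule) ∨
       (∃ c ∈ r.head, ∃ e, c = ConElem.rex e ∧ s = e.rule.toRule)}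

/-- The rules appearing in a theory: the rules of `R` together with the rules
nested in them. -/
def Theory.rules (D : Theory) : Set Rule :=
  {r | r ∈ D.R ∨ ∃ m ∈ D.R, r ∈ m.nestedRules}

/-- Two rules have the same content when they have the same antecedent, arrow,
mode and consequent (the labels may differ). -/
def Rule.contentEq (r s : Rule) : Prop :=
  r.ants = s.ants ∧ r.arrow = s.arrow ∧ r.mode = s.mode ∧ r.head = s.head

/-- `y` is (a rule expression standing for) the negation of a rule with the same
content as `x`. -/
def SRule.negContentOf (y x : SRule) : Prop :=
  x.1.contentEq y.1 ∧ y.2 = !x.2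

/-- The superiority relation of a theory, as a relation. -/
def Theory.supRel (D : Theory) : Rule → Rule → Prop := fun a b => (a, b) ∈ D.sup

/-- A relation is acyclic when its transitive closure has no cycle. -/
def Acyclic {β : Type*} (r : β → β → Prop) : Prop := ∀ a, ¬ Relation.TransGen r a a

/-- `C(ζ) > C(γ)`: the standard rules concluded by the two meta-rules are in the
superiority relation. -/
def headSup (D : Theory) (ζ γ : Rule) : Prop :=
  ∃ eζ eγ : RuleExpr, ConElem.rex eζ ∈ ζ.head ∧ ConElem.rex eγ ∈ γ.head ∧
    (eζ.rule.toRule, eγ.rule.toRule) ∈ D.sup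

/-- The extended superiority relation
`≻ = > ∪ {(α,β) | (α,β) ∉ > ∧ (C(α),C(β)) ∈ >}`. -/
def Theory.extSupRel (D : Theory) : Rule → Rule → Prop := fun a b =>
  (a, b) ∈ D.sup ∨ ((a, b) ∉ D.sup ∧ headSup D a b)

/-! Conflicts between rules / rule expressions (Definitions 13 and 14). -/

/-- Simple conflict (Definition 13): `β` is the negation of a rule with the same
content as `α` (condition 1), or the consequent ⊗-chains of the two meta-rules
contain, at some indices, simply conflicting rule expressions (condition 2). -/
inductive SimplyConflicts : SRule → SRule → Prop
  | negation {r s : Rule} {b : Bool} :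
      r.contentEq s → SimplyConflicts (r, b) (s, !b)
  | chain {r s : Rule} {br bs : Bool} {ν ζ : RuleExpr} :
      ConElem.rex ν ∈ r.head → ConElem.rex ζ ∈ s.head →
      SimplyConflicts ν.toSRule ζ.toSRule →
      SimplyConflicts (r, br) (s, bs)

/-- Cautious conflict (Definition 14). -/
inductive CautiouslyConflicts : SRule → SRule → Prop
  /-- (1) `β` is the negation of a rule with the same content as `α`. -/
  | negation {r s : Rule} {b : Bool} :
      r.contentEq s → CautiouslyConflicts (r, b) (s, !b)
  /-- (2) same antecedent, arrow and mode, complementary conclusions. -/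
  | oppositeHead {r s : Rule} {c : ConElem} :
      r.ants = s.ants → r.arrow = s.arrow → r.mode = s.mode →
      r.head = [c] → s.head = [c.compl] →
      CautiouslyConflicts (r, true) (s, true)
  /-- (3) an obligation rule and a permission rule with the same antecedent and
  complementary conclusions. -/
  | oblPerm {r s : Rule} {c : ConElem} :
      r.ants = s.ants → r.arrow = s.arrow →
      r.mode = .O → s.mode = .P →
      r.head = [c] → s.head = [c.compl] →
      CautiouslyConflicts (r, true) (s, true)
  /-- (4a) obligation rules with the same antecedent whose ⊗-chains agree up to
  index `i` and have complementary elements at index `i`. -/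
  | chainDiverge {r s : Rule} {i : ℕ} {ci cs : ConElem} :
      r.ants = s.ants → r.arrow = .defeasible → s.arrow = .defeasible →
      r.mode = .O → s.mode = .O →
      (∀ k < i, r.head[k]? = s.head[k]?) →
      r.head[i]? = some ci → s.head[i]? = some cs → ci = cs.compl →
      CautiouslyConflicts (r, true) (s, true)
  /-- (4b) obligation rules with the same antecedent, the ⊗-chain of the first
  being a proper prefix of the ⊗-chain of the second. -/
  | chainPrefix {r s : Rule} :
      r.ants = s.ants → r.arrow = .defeasible → s.arrow = .defeasible →
      r.mode = .O → s.mode = .O →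
      r.head.length < s.head.length →
      r.head <+: s.head →
      CautiouslyConflicts (r, true) (s, true)
  /-- (5) the consequent ⊗-chains of the two meta-rules contain, at some
  indices, cautiously conflicting rule expressions. -/
  | chain {r s : Rule} {br bs : Bool} {ν ζ : RuleExpr} :
      ConElem.rex ν ∈ r.head → ConElem.rex ζ ∈ s.head →
      CautiouslyConflicts ν.toSRule ζ.toSRule →
      CautiouslyConflicts (r, br) (s, bs)

/-- Symmetric closure of simple conflict ("α conflicts with β and the other way
around"). -/
def sConf (x y : SRule) : Prop := SimplyConflicts x y ∨ SimplyConflicts y x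

/-- Symmetric closure of cautious conflict. -/
def cConf (x y : SRule) : Prop := CautiouslyConflicts x y ∨ CautiouslyConflicts y x

/-- The conflict notion associated with each variant of the logic. -/
def Variant.conf : Variant → SRule → SRule → Prop
  | .S => sConf
  | .Cau => cConf

/-! Tagged modal formulas, applicability, proof conditions and provability. -/

/-- A conclusion: a plain literal or a (signed) rule. -/
inductive Concl
  | lit : PLit → Concl
  | rul : Rule → Bool → Concl
deriving DecidableEq

/-- A tagged modal formula `±∂_□ l` / `±∂^m_□ α`: sign (`true` = +, `false` = −),
mode, and conclusion. -/
abbrev Tag := Bool × Modality × Concl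

def ConElem.toConcl : ConElem → Concl
  | .lit l => .lit l
  | .rex e => .rul e.rule.toRule e.pos

/-- An antecedent element holds relative to the set `Pr` of already proved
tagged formulas (Definition 15, conditions 1–3 and 1'–3'). -/
def antHolds (Pr : Tag → Prop) : AntElem → Prop
  | .lit (.plain l) => Pr (true, .C, .lit l)
  | .lit (.mod m l) => Pr (true, m, .lit l)
  | .lit (.negMod m l) => Pr (false, m, .lit l)
  | .rex e => Pr (true, .C, .rul e.rule.toRule e.pos)
  | .modRex m e => Pr (true, m, .rul e.rule.toRule e.pos)
  | .negModRex m e => Pr (false, m, .rul e.rule.toRule e.pos)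

/-- An antecedent element fails, relative to `Pr` (Definition 16). -/
def antFails (Pr : Tag → Prop) : AntElem → Prop
  | .lit (.plain l) => Pr (false, .C, .lit l)
  | .lit (.mod m l) => Pr (false, m, .lit l)
  | .lit (.negMod m l) => Pr (true, m, .lit l)
  | .rex e => Pr (false, .C, .rul e.rule.toRule e.pos)
  | .modRex m e => Pr (false, m, .rul e.rule.toRule e.pos)
  | .negModRex m e => Pr (true, m, .rul e.rule.toRule e.pos)

/-- An earlier ⊗-chain element is a violated obligation (Definition 15, cond. 4). -/
def conViolated (Pr : Tag → Prop) : ConElem → Prop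
  | .lit l => Pr (true, .O, .lit l) ∧ Pr (true, .C, .lit l.compl)
  | .rex e => Pr (true, .O, .rul e.rule.toRule e.pos) ∧ Pr (false, .C, .rul e.rule.toRule e.pos)

/-- Strong negation of `conViolated` (Definition 16, cond. 4). -/
def conNotViolated (Pr : Tag → Prop) : ConElem → Prop
  | .lit l => Pr (false, .O, .lit l) ∨ Pr (false, .C, .lit l.compl)
  | .rex e => Pr (false, .O, .rul e.rule.toRule e.pos) ∨ Pr (true, .C, .rul e.rule.toRule e.pos)

/-- Applicability of a rule (Definition 15): the rule itself is provable with
mode C and every antecedent element holds. -/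
def Applicable (Pr : Tag → Prop) (α : Rule) : Prop :=
  Pr (true, .C, .rul α true) ∧ ∀ a ∈ α.ants, antHolds Pr a

/-- Applicability of an obligation rule at index `i` of its ⊗-chain. -/
def ApplicableAt (Pr : Tag → Prop) (α : Rule) (i : ℕ) : Prop :=
  Applicable Pr α ∧ ∀ j < i, ∀ c, α.head[j]? = some c → conViolated Pr c

/-- Discardability of a rule (Definition 16): strong negation of applicability. -/
def Discarded (Pr : Tag → Prop) (α : Rule) : Prop :=
  Pr (false, .C, .rul α true) ∨ ∃ a ∈ α.ants, antFails Pr a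

/-- Discardability of an obligation rule at index `i`. -/
def DiscardedAt (Pr : Tag → Prop) (α : Rule) (i : ℕ) : Prop :=
  Discarded Pr α ∨ ∃ j < i, ∃ c, α.head[j]? = some c ∧ conNotViolated Pr c

/-- `l` occurs at index `i` of the ⊗-chain of `α`. -/
def Rule.litAt (α : Rule) (l : PLit) (i : ℕ) : Prop := α.head[i]? = some (ConElem.lit l)

/-- The signed rule `x` occurs at index `i` of the ⊗-chain of `α`. -/
def Rule.rexAt (α : Rule) (x : SRule) (i : ℕ) : Prop :=
  ∃ e : RuleExpr, α.head[i]? = some (ConElem.rex e) ∧ e.toSRule = x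

def Rule.concludesLit (α : Rule) (l : PLit) : Prop := ConElem.lit l ∈ α.head

def Rule.concludesRex (α : Rule) (x : SRule) : Prop :=
  ∃ e : RuleExpr, ConElem.rex e ∈ α.head ∧ e.toSRule = x

/-! ### Proof conditions for literals (Definitions 4, 5, 6) -/

/-- `+∂_C l` (Definition 4). -/
def plusC (D : Theory) (Pr : Tag → Prop) (l : PLit) : Prop :=
  l ∈ D.F ∨
  (l.compl ∉ D.F ∧
    (∃ β ∈ D.rules, β.mode = .C ∧ β.arrow = .defeasible ∧ β.concludesLit l ∧
        Applicable Pr β) ∧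
    ∀ γ ∈ D.rules, γ.mode = .C → γ.concludesLit l.compl →
      (Discarded Pr γ ∨
        ∃ ζ ∈ D.rules, ζ.mode = .C ∧ ζ.concludesLit l ∧ Applicable Pr ζ ∧ (ζ, γ) ∈ D.sup))

/-- `−∂_C l` (Definition 4). -/
def minusC (D : Theory) (Pr : Tag → Prop) (l : PLit) : Prop :=
  l ∉ D.F ∧
  (l.compl ∈ D.F ∨
    (∀ β ∈ D.rules, β.mode = .C → β.arrow = .defeasible → β.concludesLit l →
        Discarded Pr β) ∨
    ∃ γ ∈ D.rules, γ.mode = .C ∧ γ.concludesLit l.compl ∧ Applicable Pr γ ∧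
      ∀ ζ ∈ D.rules, ζ.mode = .C → ζ.concludesLit l → (Discarded Pr ζ ∨ (ζ, γ) ∉ D.sup))

/-- `+∂_O l` (Definition 5). -/
def plusO (D : Theory) (Pr : Tag → Prop) (l : PLit) : Prop :=
  (∃ β ∈ D.rules, β.mode = .O ∧ β.arrow = .defeasible ∧
      ∃ i, β.litAt l i ∧ ApplicableAt Pr β i) ∧
  (∀ γ ∈ D.rules,
    (γ.mode = .O → ∀ j, γ.litAt l.compl j →
      (DiscardedAt Pr γ j ∨
        ∃ ζ ∈ D.rules, ζ.mode = .O ∧ (∃ k, ζ.litAt l k ∧ ApplicableAt Pr ζ k) ∧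
          (ζ, γ) ∈ D.sup)) ∧
    (γ.mode = .P → γ.concludesLit l.compl →
      (Discarded Pr γ ∨
        ∃ ζ ∈ D.rules, ζ.mode = .O ∧ (∃ k, ζ.litAt l k ∧ ApplicableAt Pr ζ k) ∧
          (ζ, γ) ∈ D.sup)))

/-- `−∂_O l` (Definition 5). -/
def minusO (D : Theory) (Pr : Tag → Prop) (l : PLit) : Prop :=
  (∀ β ∈ D.rules, β.mode = .O → β.arrow = .defeasible → ∀ i, β.litAt l i →
      DiscardedAt Pr β i) ∨
  (∃ γ ∈ D.rules,
    ((γ.mode = .O ∧ ∃ j, γ.litAt l.compl j ∧ ApplicableAt Pr γ j) ∨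
     (γ.mode = .P ∧ γ.concludesLit l.compl ∧ Applicable Pr γ)) ∧
    ∀ ζ ∈ D.rules, ζ.mode = .O → ∀ k, ζ.litAt l k →
      (DiscardedAt Pr ζ k ∨ (ζ, γ) ∉ D.sup))

/-- `+∂_P l` (Definition 6). -/
def plusP (D : Theory) (Pr : Tag → Prop) (l : PLit) : Prop :=
  Pr (true, .O, .lit l) ∨
  ((∃ β ∈ D.rules, β.mode = .P ∧ β.arrow = .defeasible ∧ β.concludesLit l ∧
      Applicable Pr β) ∧
   ∀ γ ∈ D.rules, γ.mode = .O → ∀ j, γ.litAt l.compl j →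
     (DiscardedAt Pr γ j ∨
      ∃ ζ ∈ D.rules,
        ((ζ.mode = .P ∧ ζ.concludesLit l ∧ Applicable Pr ζ) ∨
         (ζ.mode = .O ∧ ∃ k, ζ.litAt l k ∧ ApplicableAt Pr ζ k)) ∧
        (ζ, γ) ∈ D.sup))

/-- `−∂_P l` (Definition 6). -/
def minusP (D : Theory) (Pr : Tag → Prop) (l : PLit) : Prop :=
  Pr (false, .O, .lit l) ∧
  ∀ β ∈ D.rules, β.mode = .P → β.arrow = .defeasible → β.concludesLit l →
    (Discarded Pr β ∨
     ∃ γ ∈ D.rules, γ.mode = .O ∧ (∃ j, γ.litAt l.compl j ∧ ApplicableAt Pr γ j) ∧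
       ∀ ζ ∈ D.rules,
         (ζ.mode = .P → ζ.concludesLit l → (Discarded Pr ζ ∨ (ζ, γ) ∉ D.sup)) ∧
         (ζ.mode = .O → ∀ k, ζ.litAt l k → (DiscardedAt Pr ζ k ∨ (ζ, γ) ∉ D.sup)))

/-! ### Meta-proof conditions, Simple Conflict variant (Definitions 9, 10, 12) -/

/-- A candidate defeater conclusion `z` for `x` given the attacked expression
`y`: same content and sign as `x`, labelled either as `x` or as `y`
("χ ∈ {α, φ}"). -/
def reinstates (x y z : SRule) : Prop :=
  z.2 = x.2 ∧ z.1.contentEq x.1 ∧ (z.1.label = x.1.label ∨ z.1.label = y.1.label)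

/-- `+∂^m_C α`, simple variant (Definition 9). -/
def plusMCS (D : Theory) (Pr : Tag → Prop) (x : SRule) : Prop :=
  (x.2 = true ∧ x.1 ∈ D.R) ∨
  ((∀ ω ∈ D.R, ¬ sConf (ω, true) x) ∧
   (∃ β ∈ D.rules, β.mode = .C ∧ β.arrow = .defeasible ∧ β.concludesRex x ∧
      Applicable Pr β) ∧
   ∀ γ ∈ D.rules, γ.mode = .C → ∀ y : SRule, γ.concludesRex y → y.negContentOf x →
     (Discarded Pr γ ∨
      ∃ ζ ∈ D.rules, ζ.mode = .C ∧ (∃ z, ζ.concludesRex z ∧ reinstates x y z) ∧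
        Applicable Pr ζ ∧ (ζ, γ) ∈ D.sup))

/-- `−∂^m_C α`, simple variant (Definition 9). -/
def minusMCS (D : Theory) (Pr : Tag → Prop) (x : SRule) : Prop :=
  ¬ (x.2 = true ∧ x.1 ∈ D.R) ∧
  ((∃ ρ ∈ D.R, sConf (ρ, true) x) ∨
   ∀ β ∈ D.rules, β.mode = .C → β.arrow = .defeasible → β.concludesRex x →
     (Discarded Pr β ∨
      ∃ γ ∈ D.rules, γ.mode = .C ∧ (∃ y, γ.concludesRex y ∧ y.negContentOf x ∧
        Applicable Pr γ ∧
        ∀ ζ ∈ D.rules, ζ.mode = .C → ∀ z, ζ.concludesRex z → reinstates x y z →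
          (Discarded Pr ζ ∨ (ζ, γ) ∉ D.sup))))

/-- `+∂^m_O α`, simple variant (Definition 10). -/
def plusMOS (D : Theory) (Pr : Tag → Prop) (x : SRule) : Prop :=
  (∃ β ∈ D.rules, β.mode = .O ∧ β.arrow = .defeasible ∧
      ∃ i, β.rexAt x i ∧ ApplicableAt Pr β i) ∧
  ∀ γ ∈ D.rules, ∀ y : SRule, y.negContentOf x →
    ((γ.mode = .O → ∀ j, γ.rexAt y j →
        (DiscardedAt Pr γ j ∨
         ∃ ζ ∈ D.rules, ζ.mode = .O ∧
           (∃ k z, ζ.rexAt z k ∧ reinstates x y z ∧ ApplicableAt Pr ζ k) ∧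
           (ζ, γ) ∈ D.sup)) ∧
     (γ.mode = .P → γ.concludesRex y →
        (Discarded Pr γ ∨
         ∃ ζ ∈ D.rules, ζ.mode = .O ∧
           (∃ k z, ζ.rexAt z k ∧ reinstates x y z ∧ ApplicableAt Pr ζ k) ∧
           (ζ, γ) ∈ D.sup)))

/-- `−∂^m_O α`, simple variant (Definition 10). -/
def minusMOS (D : Theory) (Pr : Tag → Prop) (x : SRule) : Prop :=
  (∀ β ∈ D.rules, β.mode = .O → β.arrow = .defeasible → ∀ i, β.rexAt x i →
      DiscardedAt Pr β i) ∨
  (∃ γ ∈ D.rules, ∃ y : SRule, y.negContentOf x ∧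
    ((γ.mode = .O ∧ ∃ j, γ.rexAt y j ∧ ApplicableAt Pr γ j) ∨
     (γ.mode = .P ∧ γ.concludesRex y ∧ Applicable Pr γ)) ∧
    ∀ ζ ∈ D.rules, ζ.mode = .O → ∀ k z, ζ.rexAt z k → reinstates x y z →
      (DiscardedAt Pr ζ k ∨ (ζ, γ) ∉ D.sup))

/-- `+∂^m_P α`, simple variant (Definition 12). -/
def plusMPS (D : Theory) (Pr : Tag → Prop) (x : SRule) : Prop :=
  Pr (true, .O, .rul x.1 x.2) ∨
  ((∃ β ∈ D.rules, β.mode = .P ∧ β.arrow = .defeasible ∧ β.concludesRex x ∧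
      Applicable Pr β) ∧
   ∀ γ ∈ D.rules, γ.mode = .O → ∀ y : SRule, y.negContentOf x → ∀ j, γ.rexAt y j →
     (DiscardedAt Pr γ j ∨
      ∃ ζ ∈ D.rules,
        ((ζ.mode = .P ∧ ∃ z, ζ.concludesRex z ∧ reinstates x y z ∧ Applicable Pr ζ) ∨
         (ζ.mode = .O ∧ ∃ k z, ζ.rexAt z k ∧ reinstates x y z ∧ ApplicableAt Pr ζ k)) ∧
        (ζ, γ) ∈ D.sup))

/-- `−∂^m_P α`, simple variant (Definition 12). -/
def minusMPS (D : Theory) (Pr : Tag → Prop) (x : SRule) : Prop :=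
  Pr (false, .O, .rul x.1 x.2) ∧
  ∀ β ∈ D.rules, β.mode = .P → β.arrow = .defeasible → β.concludesRex x →
    (Discarded Pr β ∨
     ∃ γ ∈ D.rules, γ.mode = .O ∧
       (∃ y : SRule, y.negContentOf x ∧ (∃ j, γ.rexAt y j ∧ ApplicableAt Pr γ j) ∧
        ∀ ζ ∈ D.rules,
          ((ζ.mode = .P → ∀ z, ζ.concludesRex z → reinstates x y z →
              (Discarded Pr ζ ∨ (ζ, γ) ∉ D.sup)) ∧
           (ζ.mode = .O → ∀ k z, ζ.rexAt z k → reinstates x y z →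
              (DiscardedAt Pr ζ k ∨ (ζ, γ) ∉ D.sup)))))

/-! ### Meta-proof conditions, Cautious Conflict variant (Definitions 17, 18, 19) -/

/-- The cautious-variant defeat condition on the superiority relation:
`ζ > γ`, or `γ ≯ ζ` and `C(ζ) > C(γ)`. -/
def supC (D : Theory) (ζ γ : Rule) : Prop :=
  (ζ, γ) ∈ D.sup ∨ ((γ, ζ) ∉ D.sup ∧ headSup D ζ γ)

/-- `+∂^m_C α`, cautious variant (Definition 17). -/
def plusMCC (D : Theory) (Pr : Tag → Prop) (x : SRule) : Prop :=
  (x.2 = true ∧ x.1 ∈ D.R) ∨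
  ((∀ ω ∈ D.R, ¬ cConf (ω, true) x) ∧
   ∃ β ∈ D.rules, β.mode = .C ∧ β.arrow = .defeasible ∧ β.concludesRex x ∧
     Applicable Pr β ∧
     ∀ γ ∈ D.rules, γ.mode = .C → cConf (γ, true) (β, true) →
       (Discarded Pr γ ∨
        ∃ ζ ∈ D.rules, ζ.mode = .C ∧ cConf (ζ, true) (γ, true) ∧ Applicable Pr ζ ∧
          supC D ζ γ))

/-- `−∂^m_C α`, cautious variant (Definition 17). -/
def minusMCC (D : Theory) (Pr : Tag → Prop) (x : SRule) : Prop :=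
  ¬ (x.2 = true ∧ x.1 ∈ D.R) ∧
  ((∃ ω ∈ D.R, cConf (ω, true) x) ∨
   ∀ β ∈ D.rules, β.mode = .C → β.arrow = .defeasible → β.concludesRex x →
     (Discarded Pr β ∨
      ∃ γ ∈ D.rules, γ.mode = .C ∧ cConf (γ, true) (β, true) ∧ Applicable Pr γ ∧
        ∀ ζ ∈ D.rules, ζ.mode = .C → cConf (ζ, true) (γ, true) →
          (Discarded Pr ζ ∨ ¬ supC D ζ γ)))

/-- A cautious defeater for an attacking rule `γ`, obligation case (Def. 18). -/
def defeatMOC (D : Theory) (Pr : Tag → Prop) (γ : Rule) : Prop :=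
  ∃ ζ ∈ D.rules, ζ.mode = .O ∧ cConf ((ζ : Rule), true) (γ, true) ∧
    (∃ k z, ζ.rexAt z k ∧ ApplicableAt Pr ζ k) ∧ supC D ζ γ

/-- `+∂^m_O α`, cautious variant (Definition 18). -/
def plusMOC (D : Theory) (Pr : Tag → Prop) (x : SRule) : Prop :=
  ∃ β ∈ D.rules, β.mode = .O ∧ β.arrow = .defeasible ∧
    (∃ i, β.rexAt x i ∧ ApplicableAt Pr β i) ∧
    ∀ γ ∈ D.rules, cConf ((γ : Rule), true) (β, true) →
      ((γ.mode = .O → ∀ j y, γ.rexAt y j → (DiscardedAt Pr γ j ∨ defeatMOC D Pr γ)) ∧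
       (γ.mode = .P → (Discarded Pr γ ∨ defeatMOC D Pr γ)))

/-- `−∂^m_O α`, cautious variant (Definition 18). -/
def minusMOC (D : Theory) (Pr : Tag → Prop) (x : SRule) : Prop :=
  ∀ β ∈ D.rules, β.mode = .O → β.arrow = .defeasible → ∀ i, β.rexAt x i →
    (DiscardedAt Pr β i ∨
     ∃ γ ∈ D.rules, cConf ((γ : Rule), true) (β, true) ∧
       ((γ.mode = .O ∧ ∃ j y, γ.rexAt y j ∧ ApplicableAt Pr γ j) ∨
        (γ.mode = .P ∧ Applicable Pr γ)) ∧
       ∀ ζ ∈ D.rules, ζ.mode = .O → cConf ((ζ : Rule), true) (γ, true) →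
         ((∀ k z, ζ.rexAt z k → DiscardedAt Pr ζ k) ∨ ¬ supC D ζ γ))

/-- A cautious defeater for an attacking rule `γ`, permission case (Def. 19). -/
def defeatMPC (D : Theory) (Pr : Tag → Prop) (γ : Rule) : Prop :=
  ∃ ζ ∈ D.rules, cConf ((ζ : Rule), true) (γ, true) ∧
    ((ζ.mode = .O ∧ ∃ k z, ζ.rexAt z k ∧ ApplicableAt Pr ζ k) ∨
     (ζ.mode = .P ∧ Applicable Pr ζ)) ∧ supC D ζ γ

/-- `+∂^m_P α`, cautious variant (Definition 19). -/
def plusMPC (D : Theory) (Pr : Tag → Prop) (x : SRule) : Prop :=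
  ∃ β ∈ D.rules, β.mode = .P ∧ β.arrow = .defeasible ∧ β.concludesRex x ∧
    Applicable Pr β ∧
    ∀ γ ∈ D.rules, cConf ((γ : Rule), true) (β, true) →
      ((γ.mode = .O → ∀ j y, γ.rexAt y j → (DiscardedAt Pr γ j ∨ defeatMPC D Pr γ)) ∧
       (γ.mode = .P → (Discarded Pr γ ∨ defeatMPC D Pr γ)))

/-- `−∂^m_P α`, cautious variant (Definition 19). -/
def minusMPC (D : Theory) (Pr : Tag → Prop) (x : SRule) : Prop :=
  ∀ β ∈ D.rules, β.mode = .P → β.arrow = .defeasible → β.concludesRex x →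
    (Discarded Pr β ∨
     ∃ γ ∈ D.rules, cConf ((γ : Rule), true) (β, true) ∧
       ((γ.mode = .O ∧ ∃ j y, γ.rexAt y j ∧ ApplicableAt Pr γ j) ∨
        (γ.mode = .P ∧ Applicable Pr γ)) ∧
       ∀ ζ ∈ D.rules, cConf ((ζ : Rule), true) (γ, true) →
         (((ζ.mode = .O → ∀ k z, ζ.rexAt z k → DiscardedAt Pr ζ k) ∧
           (ζ.mode = .P → Discarded Pr ζ)) ∨ ¬ supC D ζ γ))

/-! ### Provability -/

/-- The one-step proof conditions of the logic: `Cond D V Pr t` holds when the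
tagged modal formula `t` may be appended to a proof whose previous steps are
(included in) `Pr`, according to variant `V`. -/
def Cond (D : Theory) (V : Variant) (Pr : Tag → Prop) : Tag → Prop
  | (true, .C, .lit l) => plusC D Pr l
  | (false, .C, .lit l) => minusC D Pr l
  | (true, .O, .lit l) => plusO D Pr l
  | (false, .O, .lit l) => minusO D Pr l
  | (true, .P, .lit l) => plusP D Pr l
  | (false, .P, .lit l) => minusP D Pr l
  | (true, .C, .rul r b) =>
      match V with | .S => plusMCS D Pr (r, b) | .Cau => plusMCC D Pr (r, b)
  | (false, .C, .rul r b) =>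
      match V with | .S => minusMCS D Pr (r, b) | .Cau => minusMCC D Pr (r, b)
  | (true, .O, .rul r b) =>
      match V with | .S => plusMOS D Pr (r, b) | .Cau => plusMOC D Pr (r, b)
  | (false, .O, .rul r b) =>
      match V with | .S => minusMOS D Pr (r, b) | .Cau => minusMOC D Pr (r, b)
  | (true, .P, .rul r b) =>
      match V with | .S => plusMPS D Pr (r, b) | .Cau => plusMPC D Pr (r, b)
  | (false, .P, .rul r b) =>
      match V with | .S => minusMPS D Pr (r, b) | .Cau => minusMPC D Pr (r, b)

/-- The tagged formulas provable by proofs of length at most `n`. -/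
def ProvesAt (D : Theory) (V : Variant) : ℕ → Tag → Prop
  | 0, _ => False
  | n + 1, t => ProvesAt D V n t ∨ Cond D V (ProvesAt D V n) t

/-- `D ⊢_V t`: there is a proof of the tagged modal formula `t` from `D`
according to the proof conditions of variant `V`. -/
def Proves (D : Theory) (V : Variant) (t : Tag) : Prop := ∃ n, ProvesAt D V n t

/-!
A proof of `+∂_O l` provides an applicable obligation rule for `l`, and every applicable
obligation rule for `~l` attacks it, so it must be defeated by a superior applicable obligation
rule for `l`; symmetrically for a proof of `+∂_O ~l`. Attackers cannot instead be discarded,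
because the logic is coherent: no tagged formula is provable both with `+` and with `−`
(induction on the length of proofs, comparing each positive proof condition with its negative
counterpart). Hence every applicable obligation rule for `l` or `~l` has a superior one, which
contradicts the well-foundedness of a finite acyclic superiority relation.
-/

theorem PLit.compl_compl (l : PLit) : l.compl.compl = l := by
  cases l <;> rfl

theorem Acyclic.wellFounded {α : Type*} {r : α → α → Prop} (hr : Acyclic r)
    (hfin : {p : α × α | r p.1 p.2}.Finite) : WellFounded r := by
  have : IsStrictOrder α (Relation.TransGen r) :=
    { irrefl := hr, trans := fun _ _ _ => Relation.TransGen.trans }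
  set s := Prod.fst '' {p : α × α | r p.1 p.2}
  have hs : s.WellFoundedOn (Relation.TransGen r) := (hfin.image Prod.fst).wellFoundedOn
  have hmem : ∀ {x y}, r x y → x ∈ s := fun h => ⟨(_, _), h, rfl⟩
  have hacc : ∀ x ∈ s, Acc r x := fun x hx =>
    hs.induction hx fun y _ ih =>
      ⟨y, fun z hzy => ih z (hmem hzy) (Relation.TransGen.single hzy)⟩
  exact ⟨fun x => ⟨x, fun y hyx => hacc y (hmem hyx)⟩⟩

theorem Theory.wellFounded_supRel {D : Theory} (hacyc : Acyclic D.supRel) :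
    WellFounded D.supRel :=
  hacyc.wellFounded D.sup.finite_toSet

structure Coherent (Pr₁ Pr₂ : Tag → Prop) : Prop where
  pos_neg : ∀ M c, Pr₁ (true, M, c) → ¬ Pr₂ (false, M, c)
  neg_pos : ∀ M c, Pr₂ (true, M, c) → ¬ Pr₁ (false, M, c)

namespace Coherent

variable {Pr₁ Pr₂ : Tag → Prop}

theorem symm (h : Coherent Pr₁ Pr₂) : Coherent Pr₂ Pr₁ := ⟨h.neg_pos, h.pos_neg⟩

theorem not_antFails (h : Coherent Pr₁ Pr₂) {a : AntElem} (ha : antHolds Pr₁ a) :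
    ¬ antFails Pr₂ a := by
  cases a with
  | lit e =>
    cases e with
    | plain l => exact h.pos_neg _ _ ha
    | mod m l => exact h.pos_neg _ _ ha
    | negMod m l => exact fun hf => h.neg_pos _ _ hf ha
  | rex e => exact h.pos_neg _ _ ha
  | modRex m e => exact h.pos_neg _ _ ha
  | negModRex m e => exact fun hf => h.neg_pos _ _ hf ha

theorem not_discarded (h : Coherent Pr₁ Pr₂) {α : Rule} (hα : Applicable Pr₁ α) :
    ¬ Discarded Pr₂ α := by
  rintro (hα' | ⟨a, ha, hf⟩)
  · exact h.pos_neg _ _ hα.1 hα'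
  · exact h.not_antFails (hα.2 a ha) hf

theorem not_conNotViolated (h : Coherent Pr₁ Pr₂) {c : ConElem} (hc : conViolated Pr₁ c) :
    ¬ conNotViolated Pr₂ c := by
  cases c with
  | lit l => rintro (h' | h') <;> [exact h.pos_neg _ _ hc.1 h'; exact h.pos_neg _ _ hc.2 h']
  | rex e => rintro (h' | h') <;> [exact h.pos_neg _ _ hc.1 h'; exact h.neg_pos _ _ h' hc.2]

theorem not_discardedAt (h : Coherent Pr₁ Pr₂) {α : Rule} {i : ℕ}
    (hα : ApplicableAt Pr₁ α i) : ¬ DiscardedAt Pr₂ α i := by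
  rintro (hd | ⟨j, hj, c, hc, hnv⟩)
  · exact h.not_discarded hα.1 hd
  · exact h.not_conNotViolated (hα.2 j hj c hc) hnv

variable {D : Theory}

theorem not_minusC (h : Coherent Pr₁ Pr₂) {l : PLit} (hp : plusC D Pr₁ l) :
    ¬ minusC D Pr₂ l := by
  rintro ⟨hnF, hm⟩
  rcases hp with hF | ⟨hnF', ⟨β, hβR, hβC, hβd, hβl, hβa⟩, hall⟩
  · exact hnF hF
  rcases hm with hF | hdisc | ⟨γ, hγR, hγC, hγl, hγa, hζall⟩
  · exact hnF' hF
  · exact h.not_discarded hβa (hdisc β hβR hβC hβd hβl)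
  rcases hall γ hγR hγC hγl with hd | ⟨ζ, hζR, hζC, hζl, hζa, hsup⟩
  · exact h.symm.not_discarded hγa hd
  rcases hζall ζ hζR hζC hζl with hd | hns
  · exact h.not_discarded hζa hd
  · exact hns hsup

theorem not_minusO (h : Coherent Pr₁ Pr₂) {l : PLit} (hp : plusO D Pr₁ l) :
    ¬ minusO D Pr₂ l := by
  obtain ⟨⟨β, hβR, hβO, hβd, i, hβl, hβa⟩, hall⟩ := hp
  rintro (hdisc | ⟨γ, hγR, hγc, hζall⟩)
  · exact h.not_discardedAt hβa (hdisc β hβR hβO hβd i hβl)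
  have defeated : ∀ ζ ∈ D.rules, ζ.mode = .O → (∃ k, ζ.litAt l k ∧ ApplicableAt Pr₁ ζ k) →
      (ζ, γ) ∉ D.sup := by
    rintro ζ hζR hζO ⟨k, hζl, hζa⟩
    exact (hζall ζ hζR hζO k hζl).resolve_left (h.not_discardedAt hζa)
  rcases hγc with ⟨hγO, j, hγl, hγa⟩ | ⟨hγP, hγl, hγa⟩
  · rcases (hall γ hγR).1 hγO j hγl with hd | ⟨ζ, hζR, hζO, hζa, hsup⟩
    · exact h.symm.not_discardedAt hγa hd
    · exact defeated ζ hζR hζO hζa hsup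
  · rcases (hall γ hγR).2 hγP hγl with hd | ⟨ζ, hζR, hζO, hζa, hsup⟩
    · exact h.symm.not_discarded hγa hd
    · exact defeated ζ hζR hζO hζa hsup

theorem not_minusP (h : Coherent Pr₁ Pr₂) {l : PLit} (hp : plusP D Pr₁ l) :
    ¬ minusP D Pr₂ l := by
  rintro ⟨hnO, hm⟩
  rcases hp with hO | ⟨⟨β, hβR, hβP, hβd, hβl, hβa⟩, hall⟩
  · exact h.pos_neg _ _ hO hnO
  rcases hm β hβR hβP hβd hβl with hd | ⟨γ, hγR, hγO, ⟨j, hγl, hγa⟩, hζall⟩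
  · exact h.not_discarded hβa hd
  rcases hall γ hγR hγO j hγl with hd | ⟨ζ, hζR, ⟨hζP, hζl, hζa⟩ | ⟨hζO, k, hζl, hζa⟩, hsup⟩
  · exact h.symm.not_discardedAt hγa hd
  · exact ((hζall ζ hζR).1 hζP hζl).elim (h.not_discarded hζa) (· hsup)
  · exact ((hζall ζ hζR).2 hζO k hζl).elim (h.not_discardedAt hζa) (· hsup)

theorem not_minusMCS (h : Coherent Pr₁ Pr₂) {x : SRule} (hp : plusMCS D Pr₁ x) :
    ¬ minusMCS D Pr₂ x := by
  rintro ⟨hnR, hm⟩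
  rcases hp with hR | ⟨hnc, ⟨β, hβR, hβC, hβd, hβx, hβa⟩, hall⟩
  · exact hnR hR
  rcases hm with ⟨ρ, hρ, hc⟩ | hm
  · exact hnc ρ hρ hc
  rcases hm β hβR hβC hβd hβx with hd | ⟨γ, hγR, hγC, y, hγy, hyx, hγa, hζall⟩
  · exact h.not_discarded hβa hd
  rcases hall γ hγR hγC y hγy hyx with hd | ⟨ζ, hζR, hζC, ⟨z, hζz, hre⟩, hζa, hsup⟩
  · exact h.symm.not_discarded hγa hd
  · exact (hζall ζ hζR hζC z hζz hre).elim (h.not_discarded hζa) (· hsup)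

theorem not_minusMOS (h : Coherent Pr₁ Pr₂) {x : SRule} (hp : plusMOS D Pr₁ x) :
    ¬ minusMOS D Pr₂ x := by
  obtain ⟨⟨β, hβR, hβO, hβd, i, hβx, hβa⟩, hall⟩ := hp
  rintro (hdisc | ⟨γ, hγR, y, hyx, hγc, hζall⟩)
  · exact h.not_discardedAt hβa (hdisc β hβR hβO hβd i hβx)
  have defeated : ∀ ζ ∈ D.rules, ζ.mode = .O →
      (∃ k z, ζ.rexAt z k ∧ reinstates x y z ∧ ApplicableAt Pr₁ ζ k) → (ζ, γ) ∉ D.sup := by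
    rintro ζ hζR hζO ⟨k, z, hζz, hre, hζa⟩
    exact (hζall ζ hζR hζO k z hζz hre).resolve_left (h.not_discardedAt hζa)
  rcases hγc with ⟨hγO, j, hγy, hγa⟩ | ⟨hγP, hγy, hγa⟩
  · rcases (hall γ hγR y hyx).1 hγO j hγy with hd | ⟨ζ, hζR, hζO, hζa, hsup⟩
    · exact h.symm.not_discardedAt hγa hd
    · exact defeated ζ hζR hζO hζa hsup
  · rcases (hall γ hγR y hyx).2 hγP hγy with hd | ⟨ζ, hζR, hζO, hζa, hsup⟩
    · exact h.symm.not_discarded hγa hd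
    · exact defeated ζ hζR hζO hζa hsup

theorem not_minusMPS (h : Coherent Pr₁ Pr₂) {x : SRule} (hp : plusMPS D Pr₁ x) :
    ¬ minusMPS D Pr₂ x := by
  rintro ⟨hnO, hm⟩
  rcases hp with hO | ⟨⟨β, hβR, hβP, hβd, hβx, hβa⟩, hall⟩
  · exact h.pos_neg _ _ hO hnO
  rcases hm β hβR hβP hβd hβx with hd | ⟨γ, hγR, hγO, y, hyx, ⟨j, hγy, hγa⟩, hζall⟩
  · exact h.not_discarded hβa hd
  rcases hall γ hγR hγO y hyx j hγy with
    hd | ⟨ζ, hζR, ⟨hζP, z, hζz, hre, hζa⟩ | ⟨hζO, k, z, hζz, hre, hζa⟩, hsup⟩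
  · exact h.symm.not_discardedAt hγa hd
  · exact ((hζall ζ hζR).1 hζP z hζz hre).elim (h.not_discarded hζa) (· hsup)
  · exact ((hζall ζ hζR).2 hζO k z hζz hre).elim (h.not_discardedAt hζa) (· hsup)

theorem not_minusMCC (h : Coherent Pr₁ Pr₂) {x : SRule} (hp : plusMCC D Pr₁ x) :
    ¬ minusMCC D Pr₂ x := by
  rintro ⟨hnR, hm⟩
  rcases hp with hR | ⟨hnc, β, hβR, hβC, hβd, hβx, hβa, hall⟩
  · exact hnR hR
  rcases hm with ⟨ω, hω, hc⟩ | hm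
  · exact hnc ω hω hc
  rcases hm β hβR hβC hβd hβx with hd | ⟨γ, hγR, hγC, hγc, hγa, hζall⟩
  · exact h.not_discarded hβa hd
  rcases hall γ hγR hγC hγc with hd | ⟨ζ, hζR, hζC, hζc, hζa, hsup⟩
  · exact h.symm.not_discarded hγa hd
  · exact (hζall ζ hζR hζC hζc).elim (h.not_discarded hζa) (· hsup)

theorem not_minusMOC (h : Coherent Pr₁ Pr₂) {x : SRule} (hp : plusMOC D Pr₁ x) :
    ¬ minusMOC D Pr₂ x := by
  intro hm
  obtain ⟨β, hβR, hβO, hβd, ⟨i, hβx, hβa⟩, hall⟩ := hp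
  rcases hm β hβR hβO hβd i hβx with hd | ⟨γ, hγR, hγc, hγa, hζall⟩
  · exact h.not_discardedAt hβa hd
  have not_defeated : ¬ defeatMOC D Pr₁ γ := by
    rintro ⟨ζ, hζR, hζO, hζc, ⟨k, z, hζz, hζa⟩, hsup⟩
    rcases hζall ζ hζR hζO hζc with hdisc | hns
    · exact h.not_discardedAt hζa (hdisc k z hζz)
    · exact hns hsup
  rcases hγa with ⟨hγO, j, y, hγy, hγa⟩ | ⟨hγP, hγa⟩
  · exact ((hall γ hγR hγc).1 hγO j y hγy).elim (h.symm.not_discardedAt hγa) not_defeated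
  · exact ((hall γ hγR hγc).2 hγP).elim (h.symm.not_discarded hγa) not_defeated

theorem not_minusMPC (h : Coherent Pr₁ Pr₂) {x : SRule} (hp : plusMPC D Pr₁ x) :
    ¬ minusMPC D Pr₂ x := by
  intro hm
  obtain ⟨β, hβR, hβP, hβd, hβx, hβa, hall⟩ := hp
  rcases hm β hβR hβP hβd hβx with hd | ⟨γ, hγR, hγc, hγa, hζall⟩
  · exact h.not_discarded hβa hd
  have not_defeated : ¬ defeatMPC D Pr₁ γ := by
    rintro ⟨ζ, hζR, hζc, hζa, hsup⟩
    rcases hζall ζ hζR hζc with ⟨hdiscO, hdiscP⟩ | hns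
    · rcases hζa with ⟨hζO, k, z, hζz, hζa⟩ | ⟨hζP, hζa⟩
      · exact h.not_discardedAt hζa (hdiscO hζO k z hζz)
      · exact h.not_discarded hζa (hdiscP hζP)
    · exact hns hsup
  rcases hγa with ⟨hγO, j, y, hγy, hγa⟩ | ⟨hγP, hγa⟩
  · exact ((hall γ hγR hγc).1 hγO j y hγy).elim (h.symm.not_discardedAt hγa) not_defeated
  · exact ((hall γ hγR hγc).2 hγP).elim (h.symm.not_discarded hγa) not_defeated

theorem not_cond_neg (h : Coherent Pr₁ Pr₂) {V : Variant} {M : Modality} {c : Concl}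
    (hp : Cond D V Pr₁ (true, M, c)) : ¬ Cond D V Pr₂ (false, M, c) := by
  cases c with
  | lit l => cases M with
    | C => exact h.not_minusC hp
    | O => exact h.not_minusO hp
    | P => exact h.not_minusP hp
  | rul r b => cases M with
    | C => cases V with
      | S => exact h.not_minusMCS hp
      | Cau => exact h.not_minusMCC hp
    | O => cases V with
      | S => exact h.not_minusMOS hp
      | Cau => exact h.not_minusMOC hp
    | P => cases V with
      | S => exact h.not_minusMPS hp
      | Cau => exact h.not_minusMPC hp

end Coherent

section Provability

variable {D : Theory} {V : Variant}

theorem provesAt_mono {m n : ℕ} (hmn : m ≤ n) {t : Tag} (h : ProvesAt D V m t) :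
    ProvesAt D V n t := by
  induction hmn with
  | refl => exact h
  | step _ ih => exact Or.inl ih

theorem exists_cond_of_provesAt {n : ℕ} {t : Tag} (h : ProvesAt D V n t) :
    ∃ k < n, Cond D V (ProvesAt D V k) t := by
  induction n with
  | zero => exact h.elim
  | succ n ih =>
    rcases h with h | h
    · obtain ⟨k, hk, hc⟩ := ih h
      exact ⟨k, by omega, hc⟩
    · exact ⟨n, by omega, h⟩

theorem coherent_provesAt_of_le {n a b : ℕ}
    (hn : ∀ M c, ProvesAt D V n (true, M, c) → ¬ ProvesAt D V n (false, M, c))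
    (ha : a ≤ n) (hb : b ≤ n) : Coherent (ProvesAt D V a) (ProvesAt D V b) :=
  ⟨fun M c hp hm => hn M c (provesAt_mono ha hp) (provesAt_mono hb hm),
   fun M c hp hm => hn M c (provesAt_mono hb hp) (provesAt_mono ha hm)⟩

theorem not_provesAt_pos_neg (n : ℕ) (M : Modality) (c : Concl)
    (hp : ProvesAt D V n (true, M, c)) : ¬ ProvesAt D V n (false, M, c) := by
  induction n generalizing M c with
  | zero => exact hp.elim
  | succ n ih =>
    intro hm
    obtain ⟨a, ha, hpa⟩ := exists_cond_of_provesAt hp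
    obtain ⟨b, hb, hmb⟩ := exists_cond_of_provesAt hm
    exact (coherent_provesAt_of_le ih (by omega) (by omega)).not_cond_neg hpa hmb

theorem coherent_provesAt (a b : ℕ) : Coherent (ProvesAt D V a) (ProvesAt D V b) :=
  coherent_provesAt_of_le (not_provesAt_pos_neg (max a b)) (le_max_left a b)
    (le_max_right a b)

end Provability

def OblApplicableFor (D : Theory) (Pr : Tag → Prop) (l : PLit) (ζ : Rule) : Prop :=
  ζ ∈ D.rules ∧ ζ.mode = .O ∧ ∃ k, ζ.litAt l k ∧ ApplicableAt Pr ζ k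

theorem plusO.exists_oblApplicableFor {D : Theory} {Pr : Tag → Prop} {l : PLit}
    (hp : plusO D Pr l) : ∃ β, OblApplicableFor D Pr l β := by
  obtain ⟨⟨β, hβR, hβO, -, hβl⟩, -⟩ := hp
  exact ⟨β, hβR, hβO, hβl⟩

theorem plusO.exists_sup_of_oblApplicableFor_compl {D : Theory} {Pr₁ Pr₂ : Tag → Prop}
    {l : PLit} (hc : Coherent Pr₂ Pr₁) (hp : plusO D Pr₁ l) {γ : Rule}
    (hγ : OblApplicableFor D Pr₂ l.compl γ) :
    ∃ ζ, OblApplicableFor D Pr₁ l ζ ∧ D.supRel ζ γ := by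
  obtain ⟨hγR, hγO, j, hγl, hγa⟩ := hγ
  rcases (hp.2 γ hγR).1 hγO j hγl with hd | ⟨ζ, hζR, hζO, hζl, hsup⟩
  · exact absurd hd (hc.not_discardedAt hγa)
  · exact ⟨ζ, ⟨hζR, hζO, hζl⟩, hsup⟩

/-- **Consistence for obligations** (Theorem 2, item 2). If the superiority
relation of `D` is acyclic then, for every plain literal `l` and each variant
`L ∈ {S, C}`, it is impossible that both `D ⊢_L +∂_O l` and `D ⊢_L +∂_O ¬l`. -/
theorem consistence_obligation (D : Theory) (L : Variant) (l : PLit)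
    (hacyc : Acyclic D.supRel) :
    ¬ (Proves D L (true, .O, .lit l) ∧ Proves D L (true, .O, .lit l.compl)) := by
  rintro ⟨⟨n₁, hn₁⟩, ⟨n₂, hn₂⟩⟩
  obtain ⟨k₁, -, hl⟩ := exists_cond_of_provesAt hn₁
  obtain ⟨k₂, -, hl'⟩ := exists_cond_of_provesAt hn₂
  set Pr₁ := ProvesAt D L k₁
  set Pr₂ := ProvesAt D L k₂
  have hc : Coherent Pr₁ Pr₂ := coherent_provesAt k₁ k₂
  change plusO D Pr₁ l at hl
  change plusO D Pr₂ l.compl at hl'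
  let competing : Set Rule :=
    {ζ | OblApplicableFor D Pr₁ l ζ ∨ OblApplicableFor D Pr₂ l.compl ζ}
  have has_superior : ∀ γ ∈ competing, ∃ ζ ∈ competing, D.supRel ζ γ := by
    rintro γ (hγ | hγ)
    · rw [← l.compl_compl] at hγ
      obtain ⟨ζ, hζ, hsup⟩ := hl'.exists_sup_of_oblApplicableFor_compl hc hγ
      exact ⟨ζ, Or.inr hζ, hsup⟩
    · obtain ⟨ζ, hζ, hsup⟩ := hl.exists_sup_of_oblApplicableFor_compl hc.symm hγ
      exact ⟨ζ, Or.inl hζ, hsup⟩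
  obtain ⟨β, hβ⟩ := hl.exists_oblApplicableFor
  obtain ⟨γ, hγ, hmin⟩ := (Theory.wellFounded_supRel hacyc).has_min competing ⟨β, Or.inl hβ⟩
  obtain ⟨ζ, hζ, hsup⟩ := has_superior γ hγ
  exact hmin ζ hζ hsup

end DDL
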